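/- arXiv:2001.02608 — 2 statements merged into one kernel-verified Lean document; each statement's English description precedes it below -/
import Mathlib

section
/- Let R, S, T be groups, let U be a subgroup of R × S and V a subgroup of S × T, and let W = U * V. Then the thorax p₁(W)/k₁(W) of W is a factor group of the thorax p₁(U)/k₁(U) of U and of the thorax p₁(V)/k₁(V) of V; that is, there exist a subgroup H of p₁(U)/k₁(U) and a normal subgroup N of H with p₁(W)/k₁(W) ≅ H/N, and likewise there exist a subgroup H' of p₁(V)/k₁(V) and a normal subgroup N' of H' with p₁(W)/k₁(W) ≅ H'/N'. -/
/-! Put `W = U * V`. Every element of `p₁(W)` lies in `p₁(U)`, and `k₁(U) ≤ k₁(W)`, so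
`p₁(W)/k₁(W)` is a quotient of the image of `p₁(W)` in `p₁(U)/k₁(U)`. On the other side,
`p₂(W) ≤ p₂(V)` and `k₂(V) ≤ k₂(W)` make `p₂(W)/k₂(W)` a factor group of `p₂(V)/k₂(V)`, and the
thorax is symmetric: `p₁(X)/k₁(X)` and `p₂(X)/k₂(X)` are both the quotient of `X` by the
subgroup of pairs `(a, b) ∈ X` with `(a, 1) ∈ X`, equivalently `(1, b) ∈ X`. -/

open scoped Classical

namespace SubgroupCat

variable {R S T : Type*}

/-- The star product of subgroups `U ≤ R × S` and `V ≤ S × T`: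
`U * V = {(r, t) | ∃ s, (r, s) ∈ U ∧ (s, t) ∈ V}`. -/
def starProd [Group R] [Group S] [Group T] (U : Subgroup (R × S)) (V : Subgroup (S × T)) :
    Subgroup (R × T) where
  carrier := {rt | ∃ s : S, (rt.1, s) ∈ U ∧ (s, rt.2) ∈ V}
  one_mem' := ⟨1, one_mem U, one_mem V⟩
  mul_mem' := by
    rintro a b ⟨s, hU, hV⟩ ⟨s', hU', hV'⟩
    exact ⟨s * s', mul_mem hU hU', mul_mem hV hV'⟩
  inv_mem' := by
    rintro a ⟨s, hU, hV⟩
    exact ⟨s⁻¹, inv_mem hU, inv_mem hV⟩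

@[simp] lemma mem_starProd [Group R] [Group S] [Group T] {U : Subgroup (R × S)}
    {V : Subgroup (S × T)} {p : R × T} :
    p ∈ starProd U V ↔ ∃ s : S, (p.1, s) ∈ U ∧ (s, p.2) ∈ V := Iff.rfl

/-- First projection `p₁(U) = {r | ∃ s, (r, s) ∈ U}`. -/
def p1 [Group R] [Group S] (U : Subgroup (R × S)) : Subgroup R :=
  U.map (MonoidHom.fst R S)

/-- Second projection `p₂(U) = {s | ∃ r, (r, s) ∈ U}`. -/
def p2 [Group R] [Group S] (U : Subgroup (R × S)) : Subgroup S :=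
  U.map (MonoidHom.snd R S)

/-- First kernel `k₁(U) = {r | (r, 1) ∈ U}`. -/
def k1 [Group R] [Group S] (U : Subgroup (R × S)) : Subgroup R :=
  U.comap (MonoidHom.inl R S)

/-- Second kernel `k₂(U) = {s | (1, s) ∈ U}`. -/
def k2 [Group R] [Group S] (U : Subgroup (R × S)) : Subgroup S :=
  U.comap (MonoidHom.inr R S)

/-- `k₁(U)` is a normal subgroup of `p₁(U)`. -/
instance k1_normal [Group R] [Group S] (U : Subgroup (R × S)) :
    ((k1 U).subgroupOf (p1 U)).Normal := by
  constructor
  intro n hn g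
  rw [Subgroup.mem_subgroupOf] at hn ⊢
  obtain ⟨x, hx, h1⟩ := g.2
  have hn1 : ((n : R), (1 : S)) ∈ U := hn
  have key : (x * ((n : R), (1 : S)) * x⁻¹) ∈ U := mul_mem (mul_mem hx hn1) (inv_mem hx)
  have key' : ((x.1 * (n : R) * x.1⁻¹ : R), (1 : S)) ∈ U := by
    simpa [Prod.mul_def, Prod.inv_mk, Prod.ext_iff] using key
  have h1' : x.1 = (g : R) := h1
  show ((↑(g * n * g⁻¹) : R), (1 : S)) ∈ U
  push_cast
  rw [← h1']
  exact key'

/-- `k₂(U)` is a normal subgroup of `p₂(U)`. -/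
instance k2_normal [Group R] [Group S] (U : Subgroup (R × S)) :
    ((k2 U).subgroupOf (p2 U)).Normal := by
  constructor
  intro n hn g
  rw [Subgroup.mem_subgroupOf] at hn ⊢
  obtain ⟨x, hx, h1⟩ := g.2
  have hn1 : ((1 : R), (n : S)) ∈ U := hn
  have key : (x * ((1 : R), (n : S)) * x⁻¹) ∈ U := mul_mem (mul_mem hx hn1) (inv_mem hx)
  have key' : ((1 : R), (x.2 * (n : S) * x.2⁻¹ : S)) ∈ U := by
    simpa [Prod.mul_def, Prod.inv_mk, Prod.ext_iff] using key
  have h1' : x.2 = (g : S) := h1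
  show ((1 : R), (↑(g * n * g⁻¹) : S)) ∈ U
  push_cast
  rw [← h1']
  exact key'

end SubgroupCat

def IsFactorGroup (X Y : Type*) [Group X] [Group Y] : Prop :=
  ∃ (H : Subgroup Y) (N : Subgroup H) (_ : N.Normal), Nonempty (X ≃* H ⧸ N)

namespace IsFactorGroup

variable {A B X X' Y Y' : Type*} [Group A] [Group B] [Group X] [Group X'] [Group Y] [Group Y']

theorem quotient_of_ker_le (f : A →* B) (K : Subgroup A) [K.Normal] (h : f.ker ≤ K) :
    IsFactorGroup (A ⧸ K) B := by
  let N := K.map f.rangeRestrict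
  have hN : N.Normal := .map inferInstance _ f.rangeRestrict_surjective
  let φ := (QuotientGroup.mk' N).comp f.rangeRestrict
  have hφ : φ.ker = K := by
    rw [← MonoidHom.comap_ker, QuotientGroup.ker_mk', Subgroup.comap_map_eq,
      MonoidHom.ker_rangeRestrict, sup_eq_left.mpr h]
  exact ⟨f.range, N, hN, ⟨(QuotientGroup.quotientMulEquivOfEq hφ.symm).trans
    (QuotientGroup.quotientKerEquivOfSurjective φ
      ((QuotientGroup.mk'_surjective N).comp f.rangeRestrict_surjective))⟩⟩

theorem of_mulEquiv (e : X ≃* X') (h : IsFactorGroup X' Y) : IsFactorGroup X Y := by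
  obtain ⟨H, N, hN, ⟨e'⟩⟩ := h
  exact ⟨H, N, hN, ⟨e.trans e'⟩⟩

theorem mulEquiv (h : IsFactorGroup X Y) (e : Y ≃* Y') : IsFactorGroup X Y' := by
  obtain ⟨H, N, hN, ⟨e'⟩⟩ := h
  let eH := H.equivMapOfInjective e.toMonoidHom e.injective
  have : (N.map eH.toMonoidHom).Normal := .map hN _ eH.surjective
  exact ⟨_, _, this, ⟨e'.trans (QuotientGroup.congr N _ eH rfl)⟩⟩

theorem subquotient {G : Type*} [Group G] {A B K L : Subgroup G} (hAB : A ≤ B)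
    (hKL : K ⊓ A ≤ L) [(L.subgroupOf A).Normal] [(K.subgroupOf B).Normal] :
    IsFactorGroup (A ⧸ L.subgroupOf A) (B ⧸ K.subgroupOf B) := by
  refine quotient_of_ker_le ((QuotientGroup.mk' _).comp (Subgroup.inclusion hAB)) _ ?_
  intro a ha
  rw [← MonoidHom.comap_ker, QuotientGroup.ker_mk'] at ha
  simp only [Subgroup.mem_comap, Subgroup.mem_subgroupOf, Subgroup.coe_inclusion] at ha ⊢
  exact hKL ⟨ha, a.2⟩

end IsFactorGroup

namespace SubgroupCat

variable {R S T : Type*}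

section

variable [Group R] [Group S] [Group T]

theorem mem_p1 {U : Subgroup (R × S)} {r : R} : r ∈ p1 U ↔ ∃ s, (r, s) ∈ U := by
  simp [p1]

theorem mem_p2 {U : Subgroup (R × S)} {s : S} : s ∈ p2 U ↔ ∃ r, (r, s) ∈ U := by
  simp [p2]

theorem mem_k1 {U : Subgroup (R × S)} {r : R} : r ∈ k1 U ↔ (r, 1) ∈ U := Iff.rfl

theorem mem_k2 {U : Subgroup (R × S)} {s : S} : s ∈ k2 U ↔ (1, s) ∈ U := Iff.rfl

theorem mem_k1_iff_mem_k2 {U : Subgroup (R × S)} {r : R} {s : S} (h : (r, s) ∈ U) :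
    r ∈ k1 U ↔ s ∈ k2 U := by
  rw [mem_k1, mem_k2]
  constructor
  · intro hr
    simpa using mul_mem (inv_mem hr) h
  · intro hs
    simpa using mul_mem h (inv_mem hs)

abbrev thorax (U : Subgroup (R × S)) : Type _ := p1 U ⧸ (k1 U).subgroupOf (p1 U)

noncomputable def thoraxEquiv (U : Subgroup (R × S)) :
    thorax U ≃* p2 U ⧸ (k2 U).subgroupOf (p2 U) :=
  let f₁ : U →* thorax U := (QuotientGroup.mk' _).comp ((MonoidHom.fst R S).subgroupMap U)
  let f₂ : U →* p2 U ⧸ (k2 U).subgroupOf (p2 U) :=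
    (QuotientGroup.mk' _).comp ((MonoidHom.snd R S).subgroupMap U)
  have hker : f₁.ker = f₂.ker := by
    ext ⟨⟨r, s⟩, h⟩
    change ((⟨r, _⟩ : p1 U) : thorax U) = 1 ↔
      ((⟨s, _⟩ : p2 U) : p2 U ⧸ (k2 U).subgroupOf (p2 U)) = 1
    rw [QuotientGroup.eq_one_iff, QuotientGroup.eq_one_iff]
    exact mem_k1_iff_mem_k2 h
  (QuotientGroup.quotientKerEquivOfSurjective f₁
      ((QuotientGroup.mk'_surjective _).comp (MonoidHom.subgroupMap_surjective _ U))).symm.trans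
    ((QuotientGroup.quotientMulEquivOfEq hker).trans
      (QuotientGroup.quotientKerEquivOfSurjective f₂
        ((QuotientGroup.mk'_surjective _).comp (MonoidHom.subgroupMap_surjective _ U))))

variable (U : Subgroup (R × S)) (V : Subgroup (S × T))

theorem p1_starProd_le : p1 (starProd U V) ≤ p1 U := by
  intro r hr
  obtain ⟨t, s, hU, -⟩ := mem_p1.mp hr
  exact mem_p1.mpr ⟨s, hU⟩

theorem p2_starProd_le : p2 (starProd U V) ≤ p2 V := by
  intro t ht
  obtain ⟨r, s, -, hV⟩ := mem_p2.mp ht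
  exact mem_p2.mpr ⟨s, hV⟩

theorem k1_le_k1_starProd : k1 U ≤ k1 (starProd U V) :=
  fun _ hr ↦ ⟨1, hr, one_mem V⟩

theorem k2_le_k2_starProd : k2 V ≤ k2 (starProd U V) :=
  fun _ ht ↦ ⟨1, one_mem U, ht⟩

end

/-- The thorax of `U * V` is a factor group of the thorax of `U` and of the thorax
of `V`. -/
theorem thorax_star_factor (R S T : Type*) [Group R] [Group S] [Group T]
    (U : Subgroup (R × S)) (V : Subgroup (S × T)) :
    (∃ (H : Subgroup (p1 U ⧸ (k1 U).subgroupOf (p1 U))) (N : Subgroup H) (_ : N.Normal),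
      Nonempty
        ((p1 (starProd U V) ⧸ (k1 (starProd U V)).subgroupOf (p1 (starProd U V))) ≃* H ⧸ N)) ∧
    (∃ (H' : Subgroup (p1 V ⧸ (k1 V).subgroupOf (p1 V))) (N' : Subgroup H') (_ : N'.Normal),
      Nonempty
        ((p1 (starProd U V) ⧸ (k1 (starProd U V)).subgroupOf (p1 (starProd U V))) ≃* H' ⧸ N')) := by
  have factor_U : IsFactorGroup (thorax (starProd U V)) (thorax U) :=
    IsFactorGroup.subquotient (p1_starProd_le U V) (inf_le_left.trans (k1_le_k1_starProd U V))
  have factor_V : IsFactorGroup (thorax (starProd U V)) (thorax V) :=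
    ((IsFactorGroup.subquotient (p2_starProd_le U V)
      (inf_le_left.trans (k2_le_k2_starProd U V))).of_mulEquiv (thoraxEquiv _)).mulEquiv
      (thoraxEquiv V).symm
  exact ⟨factor_U, factor_V⟩

end SubgroupCat
end

section
/- Let F, G, H, I be finite groups, and let U ≤ F × G, V ≤ G × H, W ≤ H × I be subgroups. Then k₂(U) ∩ k₁(V) is a normal subgroup of k₂(U) ∩ k₁(V * W), and k₂(V) ∩ k₁(W) is a normal subgroup of k₂(U * V) ∩ k₁(W), and there is a group isomorphism (k₂(U) ∩ k₁(V * W)) / (k₂(U) ∩ k₁(V)) ≅ (k₂(U * V) ∩ k₁(W)) / (k₂(V) ∩ k₁(W)). -/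
open scoped Classical

namespace SubgroupCat

variable {R S T : Type*}

/-!
This is Goursat's lemma for the subgroup `P = V ∩ (k₂(U) × k₁(W))` of `G × H`. Its two
projections are `k₂(U) ∩ k₁(V * W)` and `k₂(U * V) ∩ k₁(W)`, and its kernels are
`k₁(P) = k₂(U) ∩ k₁(V)` and `k₂(P) = k₂(V) ∩ k₁(W)`. For any `P ≤ G × H` and `(g, h) ∈ P` one has
`(g, 1) ∈ P ↔ (1, h) ∈ P`, so the maps `P → pr₁(P) / k₁(P)` and `P → pr₂(P) / k₂(P)` are
surjections with the same kernel.
-/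

section Goursat

variable {G H : Type*} [Group G] [Group H] (P : Subgroup (G × H))

@[simp] lemma mem_k1_s7 {g : G} : g ∈ k1 P ↔ (g, 1) ∈ P := Iff.rfl

@[simp] lemma mem_k2_s7 {h : H} : h ∈ k2 P ↔ (1, h) ∈ P := Iff.rfl

lemma k1_le_map_fst : k1 P ≤ P.map (MonoidHom.fst G H) :=
  fun g hg ↦ ⟨(g, 1), hg, rfl⟩

lemma k2_le_map_snd : k2 P ≤ P.map (MonoidHom.snd G H) :=
  fun h hh ↦ ⟨(1, h), hh, rfl⟩

instance normal_k1_subgroupOf_map_fst :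
    ((k1 P).subgroupOf (P.map (MonoidHom.fst G H))).Normal where
  conj_mem := by
    rintro ⟨n, _⟩ hn ⟨-, ⟨g, h⟩, hp, rfl⟩
    simpa [Subgroup.mem_subgroupOf] using
      mul_mem (mul_mem hp (Subgroup.mem_subgroupOf.mp hn : (n, 1) ∈ P)) (inv_mem hp)

instance normal_k2_subgroupOf_map_snd :
    ((k2 P).subgroupOf (P.map (MonoidHom.snd G H))).Normal where
  conj_mem := by
    rintro ⟨n, _⟩ hn ⟨-, ⟨g, h⟩, hp, rfl⟩
    simpa [Subgroup.mem_subgroupOf] using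
      mul_mem (mul_mem hp (Subgroup.mem_subgroupOf.mp hn : (1, n) ∈ P)) (inv_mem hp)

lemma fst_mem_k1_iff_snd_mem_k2 {p : G × H} (hp : p ∈ P) : p.1 ∈ k1 P ↔ p.2 ∈ k2 P := by
  obtain ⟨g, h⟩ := p
  constructor
  · intro h1
    simpa using mul_mem (inv_mem ((mem_k1_s7 P).mp h1)) hp
  · intro h2
    simpa using mul_mem hp (inv_mem ((mem_k2_s7 P).mp h2))

noncomputable def toQuotientK1 : P →* P.map (MonoidHom.fst G H) ⧸ (k1 P).subgroupOf _ :=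
  (QuotientGroup.mk' _).comp ((MonoidHom.fst G H).subgroupMap P)

noncomputable def toQuotientK2 : P →* P.map (MonoidHom.snd G H) ⧸ (k2 P).subgroupOf _ :=
  (QuotientGroup.mk' _).comp ((MonoidHom.snd G H).subgroupMap P)

lemma toQuotientK1_surjective : Function.Surjective (toQuotientK1 P) :=
  (QuotientGroup.mk'_surjective _).comp ((MonoidHom.fst G H).subgroupMap_surjective P)

lemma toQuotientK2_surjective : Function.Surjective (toQuotientK2 P) :=
  (QuotientGroup.mk'_surjective _).comp ((MonoidHom.snd G H).subgroupMap_surjective P)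

lemma ker_toQuotientK1_eq_ker_toQuotientK2 : (toQuotientK1 P).ker = (toQuotientK2 P).ker := by
  ext p
  simpa [toQuotientK1, toQuotientK2, Subgroup.mem_subgroupOf] using
    fst_mem_k1_iff_snd_mem_k2 P p.2

noncomputable def quotientK1EquivQuotientK2 :
    P.map (MonoidHom.fst G H) ⧸ (k1 P).subgroupOf _ ≃*
      P.map (MonoidHom.snd G H) ⧸ (k2 P).subgroupOf _ :=
  (QuotientGroup.quotientKerEquivOfSurjective _ (toQuotientK1_surjective P)).symm.trans <|
    (QuotientGroup.quotientMulEquivOfEq (ker_toQuotientK1_eq_ker_toQuotientK2 P)).trans <|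
      QuotientGroup.quotientKerEquivOfSurjective _ (toQuotientK2_surjective P)

end Goursat

section Kernels

variable {F G H I : Type*} [Group F] [Group G] [Group H] [Group I]

lemma k1_inf_prod (V : Subgroup (G × H)) (A : Subgroup G) (B : Subgroup H) :
    k1 (V ⊓ A.prod B) = A ⊓ k1 V := by
  ext g
  simp [Subgroup.mem_prod, and_comm]

lemma k2_inf_prod (V : Subgroup (G × H)) (A : Subgroup G) (B : Subgroup H) :
    k2 (V ⊓ A.prod B) = k2 V ⊓ B := by
  ext h
  simp [Subgroup.mem_prod]

lemma map_fst_inf_prod_k1 (V : Subgroup (G × H)) (A : Subgroup G) (W : Subgroup (H × I)) :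
    (V ⊓ A.prod (k1 W)).map (MonoidHom.fst G H) = A ⊓ k1 (starProd V W) := by
  ext g
  simp only [Subgroup.mem_map, Subgroup.mem_inf, Subgroup.mem_prod, mem_k1_s7, mem_starProd,
    MonoidHom.coe_fst, Prod.exists]
  grind

lemma map_snd_inf_prod_k2 (U : Subgroup (F × G)) (V : Subgroup (G × H)) (B : Subgroup H) :
    (V ⊓ (k2 U).prod B).map (MonoidHom.snd G H) = k2 (starProd U V) ⊓ B := by
  ext h
  simp only [Subgroup.mem_map, Subgroup.mem_inf, Subgroup.mem_prod, mem_k2_s7, mem_starProd,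
    MonoidHom.coe_snd, Prod.exists]
  grind

end Kernels

theorem quotient_inter_star_iso_general (F G H I : Type*) [Group F] [Group G] [Group H] [Group I]
    (U : Subgroup (F × G)) (V : Subgroup (G × H)) (W : Subgroup (H × I)) :
    k2 U ⊓ k1 V ≤ k2 U ⊓ k1 (starProd V W) ∧
    k2 V ⊓ k1 W ≤ k2 (starProd U V) ⊓ k1 W ∧
    ∃ (_ : ((k2 U ⊓ k1 V).subgroupOf (k2 U ⊓ k1 (starProd V W))).Normal)
      (_ : ((k2 V ⊓ k1 W).subgroupOf (k2 (starProd U V) ⊓ k1 W)).Normal),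
      Nonempty
        ((↥(k2 U ⊓ k1 (starProd V W)) ⧸ (k2 U ⊓ k1 V).subgroupOf (k2 U ⊓ k1 (starProd V W))) ≃*
          (↥(k2 (starProd U V) ⊓ k1 W) ⧸ (k2 V ⊓ k1 W).subgroupOf (k2 (starProd U V) ⊓ k1 W))) := by
  rw [← k1_inf_prod V (k2 U) (k1 W), ← k2_inf_prod V (k2 U) (k1 W),
    ← map_fst_inf_prod_k1 V (k2 U) W, ← map_snd_inf_prod_k2 U V (k1 W)]
  exact ⟨k1_le_map_fst _, k2_le_map_snd _, inferInstance, inferInstance,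
    ⟨quotientK1EquivQuotientK2 _⟩⟩

/-- For finite groups `F, G, H, I` and subgroups `U ≤ F × G`, `V ≤ G × H`, `W ≤ H × I`:
`k₂(U) ∩ k₁(V)` is a normal subgroup of `k₂(U) ∩ k₁(V * W)`, `k₂(V) ∩ k₁(W)` is a normal
subgroup of `k₂(U * V) ∩ k₁(W)`, and the corresponding quotients are isomorphic. -/
theorem quotient_inter_star_iso (F G H I : Type*) [Group F] [Group G] [Group H] [Group I]
    [Finite F] [Finite G] [Finite H] [Finite I]
    (U : Subgroup (F × G)) (V : Subgroup (G × H)) (W : Subgroup (H × I)) :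
    k2 U ⊓ k1 V ≤ k2 U ⊓ k1 (starProd V W) ∧
    k2 V ⊓ k1 W ≤ k2 (starProd U V) ⊓ k1 W ∧
    ∃ (_ : ((k2 U ⊓ k1 V).subgroupOf (k2 U ⊓ k1 (starProd V W))).Normal)
      (_ : ((k2 V ⊓ k1 W).subgroupOf (k2 (starProd U V) ⊓ k1 W)).Normal),
      Nonempty
        ((↥(k2 U ⊓ k1 (starProd V W)) ⧸ (k2 U ⊓ k1 V).subgroupOf (k2 U ⊓ k1 (starProd V W))) ≃*
          (↥(k2 (starProd U V) ⊓ k1 W) ⧸ (k2 V ⊓ k1 W).subgroupOf (k2 (starProd U V) ⊓ k1 W))) :=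
  quotient_inter_star_iso_general F G H I U V W

end SubgroupCat
end
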